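/- Let Θ : D → g and Φ : g → g be k-linear maps. Then the map (X, ξ) ↦ (X, Θ X + Φ ξ) preserves the bracket ⁅(X,ξ),(Y,η)⁆ = (⁅X,Y⁆, ⁅ξ,η⁆ + X·η − Y·ξ), i.e. Θ⁅X,Y⁆ + Φ(⁅ξ,η⁆ + X·η − Y·ξ) = ⁅ΘX + Φξ, ΘY + Φη⁆ + X·(ΘY + Φη) − Y·(ΘX + Φξ) holds for all X, Y ∈ D and ξ, η ∈ g, if and only if the following three conditions hold: (i) Φ⁅ξ,η⁆ = ⁅Φξ, Φη⁆ for all ξ, η ∈ g; (ii) Θ⁅X,Y⁆ = X·(ΘY) − Y·(ΘX) + ⁅ΘX, ΘY⁆ for all X, Y ∈ D; (iii) Φ(X·η) = X·(Φη) + ⁅ΘX, Φη⁆ for all X ∈ D, η ∈ g. (This is the characterization, proved in the paper's Proposition on gauge transformations and due to Mackenzie, of gauge transformations of the trivial transitive Lie algebroid TM × 𝔨 in terms of pairs (θ, Φ) where θ satisfies the Maurer–Cartan equation and dΦ + ad_θ ∘ Φ = 0.) -/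

import Mathlib

open TensorProduct

/-- The three conditions are the specializations `X = Y = 0`, `ξ = η = 0` and `Y = ξ = 0` of
bracket preservation; conversely, expanding both sides by additivity, the identity is the sum of
these three pieces. -/
theorem gauge_map_lie_iff {D g : Type*} [LieRing D] [LieRing g]
    (ρ : D →+ g →+ g) (Θ : D →+ g) (Φ : g →+ g) :
    (∀ (X Y : D) (ξ η : g),
        Θ ⁅X, Y⁆ + Φ (⁅ξ, η⁆ + ρ X η - ρ Y ξ) =
          ⁅Θ X + Φ ξ, Θ Y + Φ η⁆ + ρ X (Θ Y + Φ η) - ρ Y (Θ X + Φ ξ)) ↔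
      ((∀ ξ η : g, Φ ⁅ξ, η⁆ = ⁅Φ ξ, Φ η⁆) ∧
       (∀ X Y : D, Θ ⁅X, Y⁆ = ρ X (Θ Y) - ρ Y (Θ X) + ⁅Θ X, Θ Y⁆) ∧
       (∀ (X : D) (η : g), Φ (ρ X η) = ρ X (Φ η) + ⁅Θ X, Φ η⁆)) := by
  constructor
  · intro h
    refine ⟨fun ξ η => by simpa using h 0 0 ξ η, fun X Y => ?_, fun X η => ?_⟩
    · have h_curv := h X Y 0 0
      simp only [lie_zero, map_zero, add_zero, sub_self] at h_curv
      rw [h_curv]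
      abel
    · have h_flat := h X 0 0 η
      simp only [zero_lie, lie_zero, map_zero, AddMonoidHom.zero_apply, zero_add, add_zero,
        sub_zero] at h_flat
      rw [h_flat, add_comm]
  · rintro ⟨hΦ, hΘ, hΦΘ⟩ X Y ξ η
    simp only [map_add, map_sub, hΦ, hΘ, hΦΘ, lie_add, add_lie]
    -- the cross term `⁅Φ ξ, Θ Y⁆` is matched by `⁅Θ Y, Φ ξ⁆` from `(iii)` at `(Y, ξ)`
    rw [← lie_skew (Φ ξ) (Θ Y)]
    abel

/-- Mackenzie's characterization of gauge transformations of the trivial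
transitive Lie algebroid `TM × 𝔨`, algebraic model: for `k`-linear maps
`Θ : D → g` and `Φ : g → g` (where `D = Der_k(R)`, `g = R ⊗[k] 𝔨`, and `X` acts on `g`
by `X ⊗ id`), the map `(X, ξ) ↦ (X, Θ X + Φ ξ)` preserves the bracket
`⁅(X,ξ),(Y,η)⁆ = (⁅X,Y⁆, ⁅ξ,η⁆ + X·η - Y·ξ)` if and only if
(i) `Φ⁅ξ,η⁆ = ⁅Φξ, Φη⁆`, (ii) `Θ⁅X,Y⁆ = X·(ΘY) - Y·(ΘX) + ⁅ΘX, ΘY⁆`, and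
(iii) `Φ(X·η) = X·(Φη) + ⁅ΘX, Φη⁆`. -/
theorem gauge_transformation_characterization
    {k R 𝔨 : Type*} [CommRing k] [CommRing R] [Algebra k R]
    [LieRing 𝔨] [LieAlgebra k 𝔨]
    (Θ : Derivation k R R →ₗ[k] (R ⊗[k] 𝔨)) (Φ : (R ⊗[k] 𝔨) →ₗ[k] (R ⊗[k] 𝔨)) :
    (∀ (X Y : Derivation k R R) (ξ η : R ⊗[k] 𝔨),
        Θ ⁅X, Y⁆ + Φ (⁅ξ, η⁆ + LinearMap.rTensor 𝔨 X.toLinearMap η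
            - LinearMap.rTensor 𝔨 Y.toLinearMap ξ) =
          ⁅Θ X + Φ ξ, Θ Y + Φ η⁆
            + LinearMap.rTensor 𝔨 X.toLinearMap (Θ Y + Φ η)
            - LinearMap.rTensor 𝔨 Y.toLinearMap (Θ X + Φ ξ)) ↔
      ((∀ ξ η : R ⊗[k] 𝔨, Φ ⁅ξ, η⁆ = ⁅Φ ξ, Φ η⁆) ∧
       (∀ X Y : Derivation k R R,
          Θ ⁅X, Y⁆ = LinearMap.rTensor 𝔨 X.toLinearMap (Θ Y)
            - LinearMap.rTensor 𝔨 Y.toLinearMap (Θ X) + ⁅Θ X, Θ Y⁆) ∧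
       (∀ (X : Derivation k R R) (η : R ⊗[k] 𝔨),
          Φ (LinearMap.rTensor 𝔨 X.toLinearMap η) =
            LinearMap.rTensor 𝔨 X.toLinearMap (Φ η) + ⁅Θ X, Φ η⁆)) := by
  let ρ : Derivation k R R →+ (R ⊗[k] 𝔨) →+ (R ⊗[k] 𝔨) :=
    { toFun := fun X => (LinearMap.rTensor 𝔨 X.toLinearMap).toAddMonoidHom
      map_zero' := by ext; simp
      map_add' := fun X Y => by ext; simp [LinearMap.rTensor_add] }
  exact gauge_map_lie_iff ρ Θ.toAddMonoidHom Φ.toAddMonoidHom
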